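/- Let P be a vector space over 𝔽₂ of dimension 2n with a nondegenerate alternating bilinear form, let G be any subspace of P, and set S = G ∩ G^⊥ (so S is isotropic and S^⊥ = G + G^⊥). Then for every subspace α of P: [dim((S^⊥ ∩ α) + G) − dim G] + [dim((G^⊥ ∩ α^⊥) + S) − dim S] = dim S^⊥ − dim G. In particular, if dim G = n − k + g and dim S = n − k − g, the right-hand side equals 2k. -/

import Mathlib

/-!
Put `A = (S^⊥ ∩ α) + G`. Since `S ⊆ G^⊥`, the modular law gives
`A^⊥ = (S + α^⊥) ∩ G^⊥ = (G^⊥ ∩ α^⊥) + S`, so the two summands are `dim A − dim G` and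
`dim A^⊥ − dim S`; their sum is `dim P − dim S − dim G = dim S^⊥ − dim G` by nondegeneracy.
-/

open Module

namespace LinearMap.BilinForm

section CommRing

variable {R M : Type*} [CommRing R] [AddCommGroup M] [Module R M]

theorem orthogonal_sup (B : LinearMap.BilinForm R M) (W₁ W₂ : Submodule R M) :
    B.orthogonal (W₁ ⊔ W₂) = B.orthogonal W₁ ⊓ B.orthogonal W₂ := by
  refine le_antisymm
    (le_inf (B.orthogonal_le le_sup_left) (B.orthogonal_le le_sup_right)) ?_
  rintro x ⟨hx₁, hx₂⟩ y hy
  obtain ⟨a, ha, b, hb, rfl⟩ := Submodule.mem_sup.mp hy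
  show B (a + b) x = 0
  rw [map_add, LinearMap.add_apply, hx₁ a ha, hx₂ b hb, add_zero]

end CommRing

section Field

variable {K V : Type*} [Field K] [AddCommGroup V] [Module K V] [FiniteDimensional K V]
  {B : LinearMap.BilinForm K V}

theorem orthogonal_inf (hB : B.Nondegenerate) (hr : B.IsRefl) (W₁ W₂ : Submodule K V) :
    B.orthogonal (W₁ ⊓ W₂) = B.orthogonal W₁ ⊔ B.orthogonal W₂ := by
  conv_lhs => rw [← B.orthogonal_orthogonal hB hr W₁, ← B.orthogonal_orthogonal hB hr W₂]
  rw [← orthogonal_sup, B.orthogonal_orthogonal hB hr]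

theorem finrank_add_finrank_orthogonal_of_nondegenerate (hB : B.Nondegenerate)
    (W : Submodule K V) : finrank K W + finrank K (B.orthogonal W) = finrank K V := by
  have := W.finrank_le
  rw [B.finrank_orthogonal hB]
  omega

theorem orthogonal_orthogonal_inf_sup (hB : B.Nondegenerate) (hr : B.IsRefl)
    {G S : Submodule K V} (hSG : S ≤ B.orthogonal G) (α : Submodule K V) :
    B.orthogonal ((B.orthogonal S ⊓ α) ⊔ G) = (B.orthogonal G ⊓ B.orthogonal α) ⊔ S := by
  rw [orthogonal_sup, orthogonal_inf hB hr, B.orthogonal_orthogonal hB hr,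
    sup_inf_assoc_of_le _ hSG, sup_comm, inf_comm (B.orthogonal α)]

theorem finrank_add_finrank_eq_finrank_orthogonal_add (hB : B.Nondegenerate) (hr : B.IsRefl)
    {G S : Submodule K V} (hSG : S ≤ B.orthogonal G) (α : Submodule K V) :
    finrank K ((B.orthogonal S ⊓ α) ⊔ G : Submodule K V)
        + finrank K ((B.orthogonal G ⊓ B.orthogonal α) ⊔ S : Submodule K V)
      = finrank K (B.orthogonal S) + finrank K S := by
  rw [← orthogonal_orthogonal_inf_sup hB hr hSG,
    finrank_add_finrank_orthogonal_of_nondegenerate hB, add_comm,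
    finrank_add_finrank_orthogonal_of_nondegenerate hB]

end Field

end LinearMap.BilinForm

/-- Cleaning identity for subsystem codes.
For a `2n`-dimensional symplectic 𝔽₂-space `P`, a gauge subspace `G ⊆ P`, and the
stabilizer subspace `S = G ∩ G^⊥`, for every subspace `α`:
`[dim((S^⊥ ∩ α) + G) − dim G] + [dim((G^⊥ ∩ α^⊥) + S) − dim S] = dim S^⊥ − dim G`;
in particular, if `dim G = n − k + g` and `dim S = n − k − g`, the right-hand side is `2k`. -/
theorem cleaning_identity_subsystem {P : Type*} [AddCommGroup P] [Module (ZMod 2) P]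
    [FiniteDimensional (ZMod 2) P] (n : ℕ) (hP : finrank (ZMod 2) P = 2 * n)
    (B : LinearMap.BilinForm (ZMod 2) P) (hB : B.Nondegenerate) (halt : B.IsAlt)
    (G S : Submodule (ZMod 2) P) (hS : S = G ⊓ B.orthogonal G)
    (α : Submodule (ZMod 2) P) :
    (((finrank (ZMod 2) ((B.orthogonal S ⊓ α) ⊔ G : Submodule (ZMod 2) P) : ℤ)
            - finrank (ZMod 2) G)
          + ((finrank (ZMod 2) ((B.orthogonal G ⊓ B.orthogonal α) ⊔ S :
                Submodule (ZMod 2) P) : ℤ) - finrank (ZMod 2) S)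
        = (finrank (ZMod 2) (B.orthogonal S) : ℤ) - finrank (ZMod 2) G) ∧
      ∀ k g : ℤ, (finrank (ZMod 2) G : ℤ) = (n : ℤ) - k + g →
        (finrank (ZMod 2) S : ℤ) = (n : ℤ) - k - g →
        (finrank (ZMod 2) (B.orthogonal S) : ℤ) - finrank (ZMod 2) G = 2 * k := by
  have hSG : S ≤ B.orthogonal G := hS ▸ inf_le_right
  have hclean :=
    LinearMap.BilinForm.finrank_add_finrank_eq_finrank_orthogonal_add hB halt.isRefl hSG α
  have hSperp := LinearMap.BilinForm.finrank_add_finrank_orthogonal_of_nondegenerate hB S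
  constructor
  · omega
  · intro k g hG hS'
    omega
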